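/- arXiv:2501.09283 — 6 statements merged into one kernel-verified Lean document; each statement's English description precedes it below -/
import Mathlib

section
/- Let n ∈ ℕ and let u_i, w_i, b_i ∈ ℝ for i = 1,…,n with u_i ≠ 0 and w_i ≠ 0 for all i, and suppose the knot positions t_i = −b_i/w_i are pairwise distinct. Then the function F(x) = Σ_{i=1}^n u_i·max(w_i·x + b_i, 0) is not differentiable at t_k for every k = 1,…,n; in particular the bound of n breakpoints for a one-hidden-layer ReLU network is attained. -/
lemma relu_diff_away (u w b x0 : ℝ) (h : w * x0 + b ≠ 0) :
    DifferentiableAt ℝ (fun x : ℝ => u * max (w * x + b) 0) x0 := by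
  have hc : ContinuousAt (fun x : ℝ => w * x + b) x0 := by fun_prop
  rcases lt_or_gt_of_ne h with hneg | hpos
  · have hev : ∀ᶠ x in nhds x0, w * x + b < 0 := hc.eventually_lt continuousAt_const hneg
    have : (fun x : ℝ => u * max (w * x + b) 0) =ᶠ[nhds x0] fun _ => u * 0 := by
      filter_upwards [hev] with x hx
      rw [max_eq_right hx.le]
    exact (differentiableAt_const _).congr_of_eventuallyEq this
  · have hev : ∀ᶠ x in nhds x0, 0 < w * x + b := continuousAt_const.eventually_lt hc hpos
    have : (fun x : ℝ => u * max (w * x + b) 0) =ᶠ[nhds x0] fun x => u * (w * x + b) := by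
      filter_upwards [hev] with x hx
      rw [max_eq_left hx.le]
    exact (by fun_prop : DifferentiableAt ℝ (fun x : ℝ => u * (w * x + b)) x0).congr_of_eventuallyEq this

lemma not_diff_relu_zero : ¬ DifferentiableAt ℝ (fun x : ℝ => max x 0) 0 := by
  intro h
  apply not_differentiableAt_abs_zero
  have : DifferentiableAt ℝ (fun x : ℝ => 2 * max x 0 - x) 0 := by
    exact ((differentiableAt_const (2:ℝ)).mul h).sub differentiableAt_fun_id
  refine this.congr_of_eventuallyEq (Filter.Eventually.of_forall fun x => ?_)
  show |x| = 2 * max x 0 - x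
  rcases le_or_gt 0 x with hx | hx
  · rw [abs_of_nonneg hx, max_eq_left hx]; ring
  · rw [abs_of_neg hx, max_eq_right hx.le]; ring

/-- With nonzero outer and inner weights and pairwise distinct knot positions
`t i = -b i / w i`, the one-hidden-layer ReLU network is not differentiable at
any of the knots: the bound of `n` breakpoints is attained. -/
theorem one_hidden_layer_relu_knots_attained
    (n : ℕ) (u w b : Fin n → ℝ)
    (hu : ∀ i, u i ≠ 0) (hw : ∀ i, w i ≠ 0)
    (ht : ∀ i j : Fin n, -b i / w i = -b j / w j → i = j) :
    ∀ k : Fin n,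
      ¬ DifferentiableAt ℝ (fun x : ℝ => ∑ i, u i * max (w i * x + b i) 0)
        (-b k / w k) := by
  intro k hF
  set t : ℝ := -b k / w k with htdef
  have htk : w k * t + b k = 0 := by
    rw [htdef, mul_comm, div_mul_cancel₀ _ (hw k)]; ring
  -- rest of the sum is differentiable at t
  have hg : DifferentiableAt ℝ
      (fun x : ℝ => ∑ i ∈ Finset.univ.erase k, u i * max (w i * x + b i) 0) t := by
    apply DifferentiableAt.fun_sum
    intro i hi
    have hik : i ≠ k := Finset.ne_of_mem_erase hi
    apply relu_diff_away
    intro hzero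
    apply hik
    have hti : t = -b i / w i := by
      rw [eq_div_iff (hw i)]
      linear_combination hzero
    exact ht i k hti.symm
  -- the k-th term is differentiable at t
  have hk : DifferentiableAt ℝ (fun x : ℝ => u k * max (w k * x + b k) 0) t := by
    have hsplit : (fun x : ℝ => u k * max (w k * x + b k) 0) =
        fun x : ℝ => (∑ i, u i * max (w i * x + b i) 0)
          - ∑ i ∈ Finset.univ.erase k, u i * max (w i * x + b i) 0 := by
      funext x
      rw [← Finset.add_sum_erase Finset.univ _ (Finset.mem_univ k)]
      ring
    rw [hsplit]
    exact hF.sub hg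
  -- strip the scalar u k
  have hk2 : DifferentiableAt ℝ (fun x : ℝ => max (w k * x + b k) 0) t := by
    have := (differentiableAt_const (u k)⁻¹).mul hk
    refine this.congr_of_eventuallyEq (Filter.Eventually.of_forall fun x => ?_)
    show (w k * x + b k) ⊔ 0 = (u k)⁻¹ * (u k * ((w k * x + b k) ⊔ 0))
    rw [inv_mul_cancel_left₀ (hu k)]
  -- compose with the affine inverse to contradict non-differentiability of relu at 0
  apply not_diff_relu_zero
  have haff : DifferentiableAt ℝ (fun y : ℝ => (y - b k) / w k) 0 := by fun_prop
  have hp : ((0:ℝ) - b k) / w k = t := by rw [htdef]; ring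
  have hk2' : DifferentiableAt ℝ (fun x : ℝ => max (w k * x + b k) 0)
      (((0:ℝ) - b k) / w k) := by rw [hp]; exact hk2
  have hcomp := hk2'.comp (0:ℝ) haff
  refine hcomp.congr_of_eventuallyEq (Filter.Eventually.of_forall fun y => ?_)
  show max y 0 = max (w k * ((y - b k) / w k) + b k) 0
  rw [mul_comm, div_mul_cancel₀ _ (hw k), sub_add_cancel]
end

section
/- Let f : ℝ → ℝ be piecewise affine with breakpoint set E where |E| ≤ m. Then the function x ↦ max(f(x), 0) is piecewise affine with at most 2m + 1 breakpoints: on each of the at most m + 1 connected components of ℝ \ E the ReLU can create at most one new knot (at the zero crossing of the affine piece), and knots of f lying in regions where the affine piece is nonpositive are destroyed (the output is identically 0 there). -/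
/-- `f : ℝ → ℝ` is piecewise affine with breakpoint set `E` if on every open
interval (open order-connected set) disjoint from `E` it agrees with an affine map. -/
def PiecewiseAffine (f : ℝ → ℝ) (E : Set ℝ) : Prop :=
  ∀ I : Set ℝ, IsOpen I → I.OrdConnected → I ∩ E = ∅ →
    ∃ a b : ℝ, ∀ x ∈ I, f x = a * x + b

/-! The gaps of `E` are indexed by the number `n ≤ #E` of breakpoints to their left, so `f` has
at most `#E + 1` affine pieces. On a piece `x ↦ a * x + b` the function `max (f x) 0` can only
bend at the zero `-b / a` of the piece, hence adding these at most `#E + 1` zeros to `E` gives a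
breakpoint set for the ReLU. -/

open Finset

section Gaps

variable {α : Type*} [LinearOrder α] (E : Finset α)

/-- The `n`-th gap of `E`: the points outside `E` with exactly `n` elements of `E` below them. -/
def gap (n : ℕ) : Set α :=
  {x | #(E.filter (· < x)) = n ∧ #(E.filter (· ≤ x)) = n}

theorem gap_ordConnected (n : ℕ) : (gap E n).OrdConnected :=
  (Set.ordConnected_singleton.preimage_mono fun _ _ hxy =>
      card_le_card (monotone_filter_right E fun _ _ hq => hq.trans_le hxy)).inter
    (Set.ordConnected_singleton.preimage_mono fun _ _ hxy =>
      card_le_card (monotone_filter_right E fun _ _ hq => hq.trans hxy))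

theorem filter_lt_subset_filter_le (x : α) : E.filter (· < x) ⊆ E.filter (· ≤ x) :=
  monotone_filter_right E fun _ _ => le_of_lt

theorem gap_inter_eq_empty (n : ℕ) : gap E n ∩ ↑E = ∅ := by
  refine Set.eq_empty_iff_forall_notMem.mpr fun q ⟨⟨hlt, hle⟩, hqE⟩ => ?_
  have hssubset : E.filter (· < q) ⊂ E.filter (· ≤ q) :=
    Finset.ssubset_iff_subset_ne.mpr ⟨filter_lt_subset_filter_le E q,
      fun h => by
        have hq : q ∈ E.filter (· < q) := h ▸ mem_filter.mpr ⟨hqE, le_rfl⟩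
        simp at hq⟩
  exact (card_lt_card hssubset).ne (hlt.trans hle.symm)

variable {E}

theorem filter_le_subset_filter_lt {I : Set α} (hI : I.OrdConnected) (hIE : I ∩ ↑E = ∅)
    {x y : α} (hx : x ∈ I) (hy : y ∈ I) : E.filter (· ≤ x) ⊆ E.filter (· < y) := by
  intro q hq
  rw [mem_filter] at hq ⊢
  refine ⟨hq.1, lt_of_not_ge fun hyq => ?_⟩
  exact Set.eq_empty_iff_forall_notMem.mp hIE q ⟨hI.out hy hx ⟨hyq, hq.2⟩, hq.1⟩

theorem subset_gap {I : Set α} (hI : I.OrdConnected) (hIE : I ∩ ↑E = ∅) {x : α} (hx : x ∈ I) :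
    I ⊆ gap E #(E.filter (· < x)) := by
  intro y hy
  have hyx := card_le_card (filter_le_subset_filter_lt hI hIE hy hx)
  have hxy := card_le_card (filter_le_subset_filter_lt hI hIE hx hy)
  have hx' := card_le_card (filter_lt_subset_filter_le E x)
  have hy' := card_le_card (filter_lt_subset_filter_le E y)
  exact ⟨by omega, by omega⟩

end Gaps

/-- `-b / a` is the zero of `a * x + b` (junk value `0` when `a = 0`, where there is no zero to
avoid); off it, the sign of `a * x + b` is constant on an order-connected set. -/
theorem exists_affine_max_zero {a b : ℝ} {I : Set ℝ} (hI : I.OrdConnected) (hzero : -b / a ∉ I) :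
    ∃ a' b' : ℝ, ∀ x ∈ I, max (a * x + b) 0 = a' * x + b' := by
  by_cases hnonneg : ∀ x ∈ I, 0 ≤ a * x + b
  · exact ⟨a, b, fun x hx => max_eq_left (hnonneg x hx)⟩
  push Not at hnonneg
  obtain ⟨x, hx, hneg⟩ := hnonneg
  refine ⟨0, 0, fun y hy => ?_⟩
  rw [zero_mul, zero_add, max_eq_right_iff]
  by_contra! hpos
  have hcont : ContinuousOn (fun t => a * t + b) (Set.uIcc x y) := by fun_prop
  obtain ⟨z, hz, hz0⟩ := intermediate_value_uIcc hcont (Set.mem_uIcc.mpr (Or.inl ⟨hneg.le, hpos.le⟩))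
  have ha : a ≠ 0 := by rintro rfl; linarith
  have hz_eq : z = -b / a := by field_simp; linarith
  exact hzero (hz_eq ▸ hI.uIcc_subset hx hy hz)

/-- Applying ReLU to a piecewise affine function with at most `m` breakpoints
yields a piecewise affine function with at most `2*m + 1` breakpoints. -/
theorem relu_comp_piecewise_affine_breakpoints
    (f : ℝ → ℝ) (m : ℕ) (E : Finset ℝ) (hE : E.card ≤ m)
    (hf : PiecewiseAffine f ↑E) :
    ∃ E' : Finset ℝ, E'.card ≤ 2 * m + 1 ∧
      PiecewiseAffine (fun x : ℝ => max (f x) 0) ↑E' := by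
  have hpiece (n : ℕ) : ∃ a b : ℝ, ∀ x ∈ interior (gap E n), f x = a * x + b :=
    hf _ isOpen_interior (gap_ordConnected E n).interior <|
      Set.subset_eq_empty (Set.inter_subset_inter_left _ interior_subset) (gap_inter_eq_empty E n)
  choose a b hab using hpiece
  refine ⟨E ∪ (range (#E + 1)).image fun n => -b n / a n, ?_, ?_⟩
  · calc #(E ∪ (range (#E + 1)).image fun n => -b n / a n) ≤ #E + (#E + 1) :=
          (card_union_le _ _).trans (Nat.add_le_add_left (card_image_le.trans (card_range _).le) _)
      _ ≤ 2 * m + 1 := by omega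
  intro I hIo hIc hIE'
  rcases I.eq_empty_or_nonempty with rfl | ⟨x₀, hx₀⟩
  · exact ⟨0, 0, by simp⟩
  have hIE : I ∩ ↑E = ∅ :=
    Set.subset_eq_empty (Set.inter_subset_inter_right _ (by simp)) hIE'
  set n := #(E.filter (· < x₀))
  have hIgap : I ⊆ interior (gap E n) := interior_maximal (subset_gap hIc hIE hx₀) hIo
  have hzero : -b n / a n ∉ I := fun h => Set.eq_empty_iff_forall_notMem.mp hIE' _
    ⟨h, by simpa using Or.inr ⟨n, card_filter_le _ _, rfl⟩⟩
  obtain ⟨a', b', hrelu⟩ := exists_affine_max_zero hIc hzero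
  exact ⟨a', b', fun x hx => by simpa only [hab n x (hIgap hx)] using hrelu x hx⟩
end

section
/- (Spline knots upper bound of ReLU-MLP, layer recurrence) Let f : ℝ → ℝ be continuous and piecewise affine with at most m breakpoints, and let n ∈ ℕ, w_i, a_i, b_i ∈ ℝ for i = 1,…,n. Then the next-layer output F(x) = Σ_{i=1}^n w_i·max(a_i·f(x) + b_i, 0) is piecewise affine with at most m + n·(m + 1) breakpoints: each neuron preserves at most the m breakpoints of the previous layer and generates at most m + 1 new knots. -/
open Set Finset

/-- For `j ≤ #E`, the open interval between the `j`-th and `(j+1)`-th points of `E`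
(unbounded at the ends). -/
def openGap (E : Finset ℝ) (j : ℕ) : Set ℝ :=
  ⋂ e ∈ E, if #{e' ∈ E | e' < e} < j then Ioi e else Iio e

section OpenGap

variable (E : Finset ℝ) (j : ℕ)

theorem isOpen_openGap : IsOpen (openGap E j) :=
  isOpen_biInter_finset fun e _ => by split_ifs; exacts [isOpen_Ioi, isOpen_Iio]

theorem ordConnected_openGap : (openGap E j).OrdConnected :=
  ordConnected_biInter fun e _ => by split_ifs <;> infer_instance

theorem openGap_inter_eq_empty : openGap E j ∩ E = ∅ := by
  refine Set.eq_empty_iff_forall_notMem.2 fun e ⟨he, heE⟩ => ?_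
  have := mem_iInter₂.1 he e heE
  split_ifs at this <;> simp at this

theorem card_filter_lt_lt_card_filter_lt_iff {e : ℝ} (he : e ∈ E) (x : ℝ) :
    #{e' ∈ E | e' < e} < #{e' ∈ E | e' < x} ↔ e < x := by
  constructor
  · intro h
    by_contra! hxe
    exact h.not_ge (card_le_card fun e' he' => by
      simp only [Finset.mem_filter] at he' ⊢; exact ⟨he'.1, he'.2.trans_le hxe⟩)
  · intro hex
    refine card_lt_card ((Finset.ssubset_iff_of_subset fun e' he' => ?_).2 ⟨e, ?_, ?_⟩)
    · simp only [Finset.mem_filter] at he' ⊢; exact ⟨he'.1, he'.2.trans hex⟩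
    · simpa using ⟨he, hex⟩
    · simp

variable {E}

theorem subset_openGap {I : Set ℝ} (hI : I.OrdConnected) (hIE : I ∩ E = ∅) {x : ℝ}
    (hx : x ∈ I) : I ⊆ openGap E #{e ∈ E | e < x} := by
  intro y hy
  refine mem_iInter₂.2 fun e he => ?_
  have heI : e ∉ I := fun h => Set.eq_empty_iff_forall_notMem.1 hIE e ⟨h, he⟩
  split_ifs with h
  · rw [card_filter_lt_lt_card_filter_lt_iff E he] at h
    by_contra hye
    exact heI (hI.out hy hx ⟨not_lt.1 hye, h.le⟩)
  · rw [card_filter_lt_lt_card_filter_lt_iff E he, not_lt] at h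
    by_contra hey
    exact heI (hI.out hx hy ⟨h, not_lt.1 hey⟩)

end OpenGap

theorem nonneg_or_nonpos_of_root_notMem {I : Set ℝ} (hI : I.OrdConnected) {c d : ℝ}
    (h : -d / c ∉ I) : (∀ x ∈ I, 0 ≤ c * x + d) ∨ ∀ x ∈ I, c * x + d ≤ 0 := by
  by_contra! ⟨⟨x, hx, hxneg⟩, ⟨y, hy, hypos⟩⟩
  have hc : c ≠ 0 := by rintro rfl; linarith
  have hroot : c * (-d / c) + d = 0 := by field_simp; ring
  refine h (hI.uIcc_subset hx hy (Set.mem_uIcc.2 ?_))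
  rcases hc.lt_or_gt with hc | hc
  · right; constructor <;> nlinarith
  · left; constructor <;> nlinarith

theorem exists_max_zero_eq_affine {I : Set ℝ} (hI : I.OrdConnected) {c d : ℝ}
    (h : -d / c ∉ I) : ∃ α β : ℝ, ∀ x ∈ I, max (c * x + d) 0 = α * x + β := by
  rcases nonneg_or_nonpos_of_root_notMem hI h with hpos | hneg
  · exact ⟨c, d, fun x hx => max_eq_left (hpos x hx)⟩
  · exact ⟨0, 0, fun x hx => by rw [max_eq_right (hneg x hx)]; ring⟩

namespace PiecewiseAffine

variable {f g : ℝ → ℝ} {S T : Set ℝ}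

theorem mono (hf : PiecewiseAffine f S) (hST : S ⊆ T) : PiecewiseAffine f T :=
  fun I hIo hIc hIT => hf I hIo hIc (Set.eq_empty_of_subset_empty
    (hIT ▸ Set.inter_subset_inter_right I hST))

theorem affine_comp (hf : PiecewiseAffine f S) (a b : ℝ) :
    PiecewiseAffine (fun x => a * f x + b) S := fun I hIo hIc hIS => by
  obtain ⟨u, v, huv⟩ := hf I hIo hIc hIS
  exact ⟨a * u, a * v + b, fun x hx => by beta_reduce; rw [huv x hx]; ring⟩

theorem const_mul (hf : PiecewiseAffine f S) (w : ℝ) :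
    PiecewiseAffine (fun x => w * f x) S := by
  simpa using hf.affine_comp w 0

theorem add (hf : PiecewiseAffine f S) (hg : PiecewiseAffine g S) :
    PiecewiseAffine (fun x => f x + g x) S := fun I hIo hIc hIS => by
  obtain ⟨a₁, b₁, h₁⟩ := hf I hIo hIc hIS
  obtain ⟨a₂, b₂, h₂⟩ := hg I hIo hIc hIS
  exact ⟨a₁ + a₂, b₁ + b₂, fun x hx => by beta_reduce; rw [h₁ x hx, h₂ x hx]; ring⟩

theorem finset_sum {ι : Type*} (s : Finset ι) {g : ι → ℝ → ℝ}
    (hg : ∀ i ∈ s, PiecewiseAffine (g i) S) :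
    PiecewiseAffine (fun x => ∑ i ∈ s, g i x) S := by
  induction s using Finset.cons_induction with
  | empty => exact fun _ _ _ _ => ⟨0, 0, by simp⟩
  | cons i s hi ih =>
    simp only [Finset.sum_cons]
    exact (hg i (mem_cons_self i s)).add (ih fun j hj => hg j (mem_cons_of_mem hj))

/-- The new knots are the roots of the affine pieces of `g`, one for each open gap of `E`. -/
theorem exists_max_zero {E : Finset ℝ} (hg : PiecewiseAffine g E) :
    ∃ K : Finset ℝ, #K ≤ #E + 1 ∧ PiecewiseAffine (fun x => max (g x) 0) ↑(E ∪ K) := by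
  choose c d hcd using fun j => hg (openGap E j) (isOpen_openGap E j)
    (ordConnected_openGap E j) (openGap_inter_eq_empty E j)
  refine ⟨(range (#E + 1)).image fun j => -d j / c j, card_image_le.trans (by simp), ?_⟩
  intro I _ hIc hIEK
  rcases I.eq_empty_or_nonempty with rfl | ⟨x, hx⟩
  · exact ⟨0, 0, by simp⟩
  rw [coe_union, Set.inter_union_distrib_left, Set.union_empty_iff] at hIEK
  obtain ⟨hIE, hIK⟩ := hIEK
  set j := #{e ∈ E | e < x}
  have hroot : -d j / c j ∉ I := fun h => Set.eq_empty_iff_forall_notMem.1 hIK _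
    ⟨h, by simpa using ⟨j, card_filter_le _ _, rfl⟩⟩
  obtain ⟨α, β, hαβ⟩ := exists_max_zero_eq_affine hIc hroot
  exact ⟨α, β, fun y hy => by
    beta_reduce; rw [hcd j y (subset_openGap hIc hIE hx hy)]; exact hαβ y hy⟩

end PiecewiseAffine

theorem relu_mlp_layer_knot_recurrence_general
    (f : ℝ → ℝ) (m : ℕ) (E : Finset ℝ)
    (hEc : E.card ≤ m) (hpa : PiecewiseAffine f ↑E)
    (n : ℕ) (w a b : Fin n → ℝ) :
    ∃ E' : Finset ℝ, E'.card ≤ m + n * (m + 1) ∧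
      PiecewiseAffine (fun x : ℝ => ∑ i, w i * max (a i * f x + b i) 0) ↑E' := by
  choose K hK hKpa using fun i => (hpa.affine_comp (a i) (b i)).exists_max_zero
  refine ⟨E ∪ univ.biUnion K, ?_, PiecewiseAffine.finset_sum _ fun i _ =>
    ((hKpa i).const_mul (w i)).mono ?_⟩
  · calc #(E ∪ univ.biUnion K) ≤ #E + ∑ i, #(K i) :=
          (Finset.card_union_le _ _).trans (Nat.add_le_add_left card_biUnion_le _)
      _ ≤ m + ∑ _i : Fin n, (m + 1) :=
          Nat.add_le_add hEc (sum_le_sum fun i _ => (hK i).trans (by omega))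
      _ = m + n * (m + 1) := by simp
  · exact coe_subset.2 (union_subset_union_right (subset_biUnion_of_mem K (mem_univ i)))

/-- Layer recurrence for the spline-knot upper bound of a ReLU MLP: feeding a
continuous piecewise affine function with at most `m` breakpoints through a
ReLU layer with `n` neurons yields at most `m + n*(m+1)` breakpoints. -/
theorem relu_mlp_layer_knot_recurrence
    (f : ℝ → ℝ) (hf : Continuous f) (m : ℕ) (E : Finset ℝ)
    (hEc : E.card ≤ m) (hpa : PiecewiseAffine f ↑E)
    (n : ℕ) (w a b : Fin n → ℝ) :
    ∃ E' : Finset ℝ, E'.card ≤ m + n * (m + 1) ∧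
      PiecewiseAffine (fun x : ℝ => ∑ i, w i * max (a i * f x + b i) 0) ↑E' :=
  relu_mlp_layer_knot_recurrence_general f m E hEc hpa n w a b
end

section
/- Let f : ℝ → ℝ be continuous and piecewise affine with at most m breakpoints, and let g : ℝ → ℝ be piecewise affine with at most n breakpoints. Then the composition g ∘ f is piecewise affine with at most m + n·(m + 1) breakpoints; moreover a breakpoint set for g ∘ f can be taken inside E_f ∪ f⁻¹(E_g), where E_f and E_g are breakpoint sets of f and g respectively. -/
namespace CompPA

def comp (Ef : Finset ℝ) (x : ℝ) : Set ℝ :=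
  ⋂ e ∈ Ef, (if e < x then Set.Ioi e else Set.Iio e)

lemma comp_open (Ef : Finset ℝ) (x : ℝ) : IsOpen (comp Ef x) := by
  apply isOpen_biInter_finset
  intro e _
  split <;> [exact isOpen_Ioi; exact isOpen_Iio]

lemma comp_ordConnected (Ef : Finset ℝ) (x : ℝ) : (comp Ef x).OrdConnected := by
  apply Set.ordConnected_biInter
  intro e _
  split <;> [exact Set.ordConnected_Ioi; exact Set.ordConnected_Iio]

lemma mem_comp_self {Ef : Finset ℝ} {x : ℝ} (hx : x ∉ Ef) : x ∈ comp Ef x := by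
  simp only [comp, Set.mem_iInter]
  intro e he
  split_ifs with h
  · exact h
  · rcases lt_or_eq_of_le (not_lt.mp h) with h' | h'
    · exact h'
    · exact absurd (h' ▸ he) hx

lemma comp_disjoint (Ef : Finset ℝ) (x : ℝ) : comp Ef x ∩ ↑Ef = ∅ := by
  ext e
  simp only [Set.mem_inter_iff, Set.mem_empty_iff_false, iff_false, not_and, comp,
    Set.mem_iInter, Finset.mem_coe]
  intro h he
  have := h e he
  split at this
  · exact lt_irrefl e this
  · exact lt_irrefl e this

lemma subset_comp {Ef : Finset ℝ} {I : Set ℝ} (hI : I.OrdConnected)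
    (hIE : I ∩ ↑Ef = ∅) {x : ℝ} (hx : x ∈ I) : I ⊆ comp Ef x := by
  intro y hy
  simp only [comp, Set.mem_iInter]
  intro e he
  have heI : e ∉ I := fun h => Set.eq_empty_iff_forall_notMem.mp hIE e ⟨h, he⟩
  split_ifs with h
  · by_contra hc
    simp only [Set.mem_Ioi, not_lt] at hc
    exact heI (hI.out hy hx ⟨hc, h.le⟩)
  · push_neg at h
    by_contra hc
    simp only [Set.mem_Iio, not_lt] at hc
    exact heI (hI.out hx hy ⟨h, hc⟩)

lemma comp_eq {Ef : Finset ℝ} {x y : ℝ} (hx : x ∉ Ef) (hy : y ∉ Ef)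
    (h : y ∈ comp Ef x) : comp Ef x = comp Ef y := by
  have h1 : comp Ef x ⊆ comp Ef y :=
    subset_comp (comp_ordConnected Ef x) (comp_disjoint Ef x) h
  have h2 : comp Ef y ⊆ comp Ef x :=
    subset_comp (comp_ordConnected Ef y) (comp_disjoint Ef y) (h1 (mem_comp_self hx))
  exact le_antisymm h1 h2

lemma filter_lt_eq {Ef : Finset ℝ} {x y : ℝ}
    (h : (Ef.filter (fun e => e < x)).card = (Ef.filter (fun e => e < y)).card) :
    Ef.filter (fun e => e < x) = Ef.filter (fun e => e < y) := by
  rcases le_total x y with hxy | hxy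
  · refine Finset.eq_of_subset_of_card_le ?_ h.ge
    intro e he
    simp only [Finset.mem_filter] at he ⊢
    exact ⟨he.1, he.2.trans_le hxy⟩
  · refine (Finset.eq_of_subset_of_card_le ?_ h.le).symm
    intro e he
    simp only [Finset.mem_filter] at he ⊢
    exact ⟨he.1, he.2.trans_le hxy⟩

lemma mem_comp_of_filter {Ef : Finset ℝ} {x y : ℝ} (hx : x ∉ Ef) (hy : y ∉ Ef)
    (h : Ef.filter (fun e => e < x) = Ef.filter (fun e => e < y)) :
    y ∈ comp Ef x := by
  simp only [comp, Set.mem_iInter]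
  intro e he
  split_ifs with hlt
  · have : e ∈ Ef.filter (fun e => e < y) := h ▸ Finset.mem_filter.mpr ⟨he, hlt⟩
    exact (Finset.mem_filter.mp this).2
  · simp only [Set.mem_Iio]
    by_contra hc
    push_neg at hc
    have hey : e < y := lt_of_le_of_ne hc (fun h' => hy (h' ▸ he))
    have : e ∈ Ef.filter (fun e => e < x) := h ▸ Finset.mem_filter.mpr ⟨he, hey⟩
    exact hlt (Finset.mem_filter.mp this).2

/-- In an open set containing `x`, there is a point `y ≠ x` in the set. -/
lemma exists_ne_mem {U : Set ℝ} (hU : IsOpen U) {x : ℝ} (hx : x ∈ U) :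
    ∃ y ∈ U, y ≠ x := by
  rcases Metric.isOpen_iff.mp hU x hx with ⟨ε, hε, hball⟩
  refine ⟨x + ε / 2, hball ?_, by linarith⟩
  simp only [Metric.mem_ball, Real.dist_eq]
  rw [show x + ε / 2 - x = ε / 2 by ring, abs_of_pos (by linarith)]
  linarith

end CompPA

/-- The composition of a continuous piecewise affine `f` (≤ m breakpoints) with
a piecewise affine `g` (≤ n breakpoints) is piecewise affine with at most
`m + n*(m+1)` breakpoints, with a breakpoint set inside `E_f ∪ f⁻¹(E_g)`. -/
theorem comp_piecewise_affine_breakpoints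
    (f g : ℝ → ℝ) (hf : Continuous f) (m n : ℕ)
    (Ef Eg : Finset ℝ) (hEf : Ef.card ≤ m) (hEg : Eg.card ≤ n)
    (hpf : PiecewiseAffine f ↑Ef) (hpg : PiecewiseAffine g ↑Eg) :
    ∃ E : Finset ℝ, ↑E ⊆ (↑Ef : Set ℝ) ∪ f ⁻¹' ↑Eg ∧
      E.card ≤ m + n * (m + 1) ∧ PiecewiseAffine (g ∘ f) ↑E := by
  classical
  set B : Set ℝ :=
    {x | x ∉ Ef ∧ f x ∈ Eg ∧ ∃ y ∈ CompPA.comp Ef x, f y ≠ f x} with hBdef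
  set φ : ℝ → ℕ × ℝ := fun x => ((Ef.filter (fun e => e < x)).card, f x) with hφdef
  -- φ is injective on B
  have hinj : Set.InjOn φ B := by
    intro x hx y hy hxy
    obtain ⟨hx1, hx2, z, hz, hz2⟩ := hx
    obtain ⟨hy1, hy2, _⟩ := hy
    have h1 : (Ef.filter (fun e => e < x)).card = (Ef.filter (fun e => e < y)).card :=
      congrArg Prod.fst hxy
    have h2 : f x = f y := congrArg Prod.snd hxy
    have hmem : y ∈ CompPA.comp Ef x :=
      CompPA.mem_comp_of_filter hx1 hy1 (CompPA.filter_lt_eq h1)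
    obtain ⟨a, b, hab⟩ := hpf (CompPA.comp Ef x) (CompPA.comp_open Ef x)
      (CompPA.comp_ordConnected Ef x) (CompPA.comp_disjoint Ef x)
    have hxmem : x ∈ CompPA.comp Ef x := CompPA.mem_comp_self hx1
    have ha : a ≠ 0 := by
      intro h0
      apply hz2
      rw [hab z hz, hab x hxmem, h0]
      ring
    have := (hab x hxmem) ▸ (hab y hmem) ▸ h2
    have : a * x = a * y := by linarith
    exact mul_left_cancel₀ ha this
  -- B is finite with a cardinality bound
  have himg : φ '' B ⊆ ↑((Finset.range (m + 1)) ×ˢ Eg) := by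
    rintro p ⟨x, hx, rfl⟩
    simp only [Finset.coe_product, Set.mem_prod, Finset.mem_coe, Finset.mem_range]
    exact ⟨Nat.lt_succ_of_le (le_trans (Finset.card_filter_le _ _) hEf), hx.2.1⟩
  have himgfin : (φ '' B).Finite :=
    Set.Finite.subset (Finset.finite_toSet _) himg
  have hBfin : B.Finite := Set.Finite.of_finite_image himgfin hinj
  have hcard : B.ncard ≤ n * (m + 1) := by
    have h1 : B.ncard = (φ '' B).ncard := (Set.ncard_image_of_injOn hinj).symm
    have h2 : (φ '' B).ncard ≤ ((Finset.range (m + 1)) ×ˢ Eg).card := by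
      have := Set.ncard_le_ncard himg (Finset.finite_toSet _)
      rwa [Set.ncard_coe_finset] at this
    rw [Finset.card_product, Finset.card_range] at h2
    calc B.ncard ≤ (m + 1) * Eg.card := h1 ▸ h2
      _ ≤ (m + 1) * n := Nat.mul_le_mul_left _ hEg
      _ = n * (m + 1) := Nat.mul_comm _ _
  refine ⟨Ef ∪ hBfin.toFinset, ?_, ?_, ?_⟩
  · -- subset condition
    intro x hx
    simp only [Finset.coe_union, Set.mem_union, Finset.mem_coe, Set.Finite.coe_toFinset] at hx
    rcases hx with hx | hx
    · exact Or.inl hx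
    · exact Or.inr hx.2.1
  · -- cardinality
    calc (Ef ∪ hBfin.toFinset).card ≤ Ef.card + hBfin.toFinset.card :=
          Finset.card_union_le _ _
      _ ≤ m + n * (m + 1) := by
          have hbt : hBfin.toFinset.card = B.ncard :=
            (Set.ncard_eq_toFinset_card B hBfin).symm
          rw [hbt]
          exact Nat.add_le_add hEf hcard
  · -- piecewise affine
    intro I hIopen hIconn hIE
    rcases Set.eq_empty_or_nonempty I with hIe | ⟨x₀, hx₀⟩
    · exact ⟨0, 0, fun x hx => absurd (hIe ▸ hx) (Set.notMem_empty x)⟩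
    have hIEf : I ∩ ↑Ef = ∅ := by
      rw [Set.eq_empty_iff_forall_notMem] at hIE ⊢
      intro x ⟨hx1, hx2⟩
      exact hIE x ⟨hx1, by simp [hx2]⟩
    have hISub : I ⊆ CompPA.comp Ef x₀ := CompPA.subset_comp hIconn hIEf hx₀
    have hx₀Ef : x₀ ∉ Ef := fun h =>
      Set.eq_empty_iff_forall_notMem.mp hIEf x₀ ⟨hx₀, h⟩
    obtain ⟨a, b, hab⟩ := hpf (CompPA.comp Ef x₀) (CompPA.comp_open Ef x₀)
      (CompPA.comp_ordConnected Ef x₀) (CompPA.comp_disjoint Ef x₀)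
    rcases eq_or_ne a 0 with ha | ha
    · -- f is constant on the component
      refine ⟨0, g b, fun x hx => ?_⟩
      have : f x = b := by rw [hab x (hISub hx), ha]; ring
      simp [Function.comp, this]
    · -- f is injective affine on the component
      -- every point of the component with value in Eg is in B
      have hkey : ∀ x ∈ CompPA.comp Ef x₀, f x ∈ Eg → x ∈ B := by
        intro x hx hfx
        have hxEf : x ∉ Ef := fun h =>
          Set.eq_empty_iff_forall_notMem.mp (CompPA.comp_disjoint Ef x₀) x ⟨hx, h⟩
        refine ⟨hxEf, hfx, ?_⟩
        rw [← CompPA.comp_eq hx₀Ef hxEf hx]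
        obtain ⟨y, hy, hyx⟩ := CompPA.exists_ne_mem (CompPA.comp_open Ef x₀) hx
        refine ⟨y, hy, ?_⟩
        rw [hab y hy, hab x hx]
        intro hcon
        exact hyx (mul_left_cancel₀ ha (by linarith))
      -- the "inverse" affine map
      set M : ℝ → ℝ := fun y => (y - b) / a with hMdef
      have hML : ∀ x : ℝ, M (a * x + b) = x := fun x => by
        simp only [hMdef]
        field_simp
        ring
      have hIM : ∀ x ∈ I, f x ∈ M ⁻¹' I := by
        intro x hx
        simp only [Set.mem_preimage, hab x (hISub hx), hML]
        exact hx
      have hMopen : IsOpen (M ⁻¹' I) :=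
        hIopen.preimage (by continuity)
      have hM2 : ∀ y : ℝ, M y = a⁻¹ * y - a⁻¹ * b := by
        intro y
        simp only [hMdef]
        field_simp
      have hMconn : (M ⁻¹' I).OrdConnected := by
        constructor
        intro y1 hy1 y2 hy2 z hz
        simp only [Set.mem_preimage] at hy1 hy2 ⊢
        rcases hz with ⟨hz1, hz2⟩
        rcases lt_or_gt_of_ne ha with ha' | ha'
        · have hinv : a⁻¹ < 0 := inv_lt_zero.mpr ha'
          refine hIconn.out hy2 hy1 ⟨?_, ?_⟩ <;> rw [hM2, hM2] <;> nlinarith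
        · have hinv : 0 < a⁻¹ := inv_pos.mpr ha'
          refine hIconn.out hy1 hy2 ⟨?_, ?_⟩ <;> rw [hM2, hM2] <;> nlinarith
      have hMEg : (M ⁻¹' I) ∩ ↑Eg = ∅ := by
        rw [Set.eq_empty_iff_forall_notMem]
        rintro y ⟨hy1, hy2⟩
        simp only [Set.mem_preimage] at hy1
        have hfMy : f (M y) = y := by
          rw [hab (M y) (hISub hy1)]
          simp only [hMdef]
          field_simp
          ring
        have : M y ∈ B := hkey (M y) (hISub hy1) (by rw [hfMy]; exact hy2)
        exact Set.eq_empty_iff_forall_notMem.mp hIE (M y)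
          ⟨hy1, by simp [Set.Finite.coe_toFinset]; exact Or.inr this⟩
      obtain ⟨c, d, hcd⟩ := hpg (M ⁻¹' I) hMopen hMconn hMEg
      refine ⟨c * a, c * b + d, fun x hx => ?_⟩
      have : g (f x) = c * f x + d := hcd (f x) (hIM x hx)
      simp only [Function.comp]
      rw [this, hab x (hISub hx)]
      ring
end

section
/- Let L, n ∈ ℕ with n ≥ 1, and let f_1, …, f_L : ℝ → ℝ each be continuous and piecewise affine with at most n breakpoints. Then the composition f_L ∘ f_{L−1} ∘ ⋯ ∘ f_1 is piecewise affine with at most (n + 1)^L − 1 breakpoints; in particular the number of knots of a deep piecewise-affine network can grow at most multiplicatively in the per-layer knot count, one factor per layer. -/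
lemma pa_comp (g h : ℝ → ℝ) (E F : Finset ℝ)
    (pg : PiecewiseAffine g ↑E) (ph : PiecewiseAffine h ↑F) :
    ∃ G : Finset ℝ, G.card ≤ E.card + (E.card + 1) * F.card ∧
      PiecewiseAffine (fun x => h (g x)) ↑G := by
  classical
  set T : Set ℝ := {x | x ∉ E ∧ g x ∈ F ∧ ¬ ∀ᶠ y in nhds x, g y = g x} with hTdef
  set φ : ℝ → WithBot ℝ × ℝ := fun x => ((E.filter (· < x)).max, g x) with hφdef
  -- key: two distinct points of T can't have the same φ value
  have key : ∀ x ∈ T, ∀ y ∈ T, x < y → φ x = φ y → False := by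
    intro x hx y hy hxy hφeq
    obtain ⟨hxE, hxF, hxc⟩ := hx
    obtain ⟨hyE, _, _⟩ := hy
    have hmax : (E.filter (· < x)).max = (E.filter (· < y)).max :=
      congrArg Prod.fst hφeq
    have hg : g x = g y := congrArg Prod.snd hφeq
    -- no E point strictly between x and y
    have hmid : ∀ e ∈ E, ¬(x < e ∧ e < y) := by
      rintro e he ⟨h1, h2⟩
      have hle : (e : WithBot ℝ) ≤ (E.filter (· < x)).max := by
        rw [hmax]
        exact Finset.le_max (Finset.mem_filter.mpr ⟨he, h2⟩)
      have hne : (E.filter (· < x)).max ≠ ⊥ := by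
        intro hbot; rw [hbot] at hle; exact (WithBot.not_coe_le_bot e) hle
      obtain ⟨m, hm⟩ := Option.ne_none_iff_exists'.mp hne
      rw [hm] at hle
      have hmE : m ∈ E.filter (· < x) := Finset.mem_of_max hm
      have hmx : m < x := (Finset.mem_filter.mp hmE).2
      have : e ≤ m := WithBot.coe_le_coe.mp hle
      linarith
    -- build an open interval around [x,y] disjoint from E
    set Sl := E.filter (· < x) with hSl
    set Sr := E.filter (y < ·) with hSr
    set u : ℝ := if hne : Sl.Nonempty then Sl.max' hne else x - 1 with hu
    set v : ℝ := if hne : Sr.Nonempty then Sr.min' hne else y + 1 with hv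
    have hux : u < x := by
      rw [hu]
      split_ifs with hne
      · exact (Finset.mem_filter.mp (Sl.max'_mem hne)).2
      · linarith
    have hyv : y < v := by
      rw [hv]
      split_ifs with hne
      · exact (Finset.mem_filter.mp (Sr.min'_mem hne)).2
      · linarith
    have hdisj : Set.Ioo u v ∩ (E : Set ℝ) = ∅ := by
      ext e
      simp only [Set.mem_inter_iff, Set.mem_Ioo, Set.mem_empty_iff_false, iff_false,
        not_and, and_imp, Finset.mem_coe]
      intro hue hev heE
      rcases lt_trichotomy e x with hex | hex | hex
      · have : e ∈ Sl := Finset.mem_filter.mpr ⟨heE, hex⟩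
        have : e ≤ u := by
          rw [hu]; rw [dif_pos ⟨e, this⟩]
          exact Finset.le_max' _ _ this
        linarith
      · exact hxE (hex ▸ heE)
      rcases lt_trichotomy e y with hey | hey | hey
      · exact hmid e heE ⟨hex, hey⟩
      · exact hyE (hey ▸ heE)
      · have : e ∈ Sr := Finset.mem_filter.mpr ⟨heE, hey⟩
        have : v ≤ e := by
          rw [hv]; rw [dif_pos ⟨e, this⟩]
          exact Finset.min'_le _ _ this
        linarith
    obtain ⟨a, b, hab⟩ := pg (Set.Ioo u v) isOpen_Ioo Set.ordConnected_Ioo hdisj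
    have hxmem : x ∈ Set.Ioo u v := ⟨hux, by linarith⟩
    have hymem : y ∈ Set.Ioo u v := ⟨by linarith, hyv⟩
    have ha0 : a = 0 := by
      have h1 := hab x hxmem
      have h2 := hab y hymem
      rw [h1, h2] at hg
      have : a * (x - y) = 0 := by linear_combination hg
      rcases mul_eq_zero.mp this with h | h
      · exact h
      · exfalso; exact hxy.ne (by linarith)
    apply hxc
    filter_upwards [isOpen_Ioo.mem_nhds hxmem] with z hz
    rw [hab z hz, hab x hxmem, ha0]; ring
  -- T is finite
  set S : Finset (WithBot ℝ × ℝ) :=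
    (insert (⊥ : WithBot ℝ) (E.image (WithBot.some : ℝ → WithBot ℝ))) ×ˢ F with hS
  have hmaps : ∀ x ∈ T, φ x ∈ S := by
    intro x hx
    rw [hS, Finset.mem_product]
    constructor
    · rcases Finset.eq_empty_or_nonempty (E.filter (· < x)) with hemp | hne
      · simp [hφdef, hemp]
      · have hcm : (E.filter (· < x)).max = ↑((E.filter (· < x)).max' hne) :=
          (Finset.coe_max' hne).symm
        show (E.filter (· < x)).max ∈ _
        rw [hcm]
        exact Finset.mem_insert_of_mem (Finset.mem_image_of_mem _
          (Finset.mem_filter.mp ((E.filter (· < x)).max'_mem hne)).1)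
    · exact hx.2.1
  have hinj : Set.InjOn φ T := by
    intro x hx y hy hxy
    by_contra hne
    rcases Ne.lt_or_gt hne with h | h
    · exact key x hx y hy h hxy
    · exact key y hy x hx h hxy.symm
  have hTfin : T.Finite := by
    apply Set.Finite.of_finite_image _ hinj
    exact S.finite_toSet.subset (by rintro _ ⟨x, hx, rfl⟩; exact hmaps x hx)
  refine ⟨E ∪ hTfin.toFinset, ?_, ?_⟩
  · have h1 : hTfin.toFinset.card ≤ S.card := by
      apply Finset.card_le_card_of_injOn φ
      · intro x hx; exact hmaps x (hTfin.mem_toFinset.mp hx)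
      · intro x hx y hy
        exact hinj (hTfin.mem_toFinset.mp (by simpa using hx))
          (hTfin.mem_toFinset.mp (by simpa using hy))
    have h2 : S.card ≤ (E.card + 1) * F.card := by
      rw [hS, Finset.card_product]
      have : (insert (⊥ : WithBot ℝ) (E.image (WithBot.some : ℝ → WithBot ℝ))).card ≤ E.card + 1 := by
        calc _ ≤ (E.image (WithBot.some : ℝ → WithBot ℝ)).card + 1 := Finset.card_insert_le _ _
        _ ≤ E.card + 1 := Nat.add_le_add_right Finset.card_image_le 1
      exact Nat.mul_le_mul this le_rfl
    calc (E ∪ hTfin.toFinset).card ≤ E.card + hTfin.toFinset.card := Finset.card_union_le _ _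
      _ ≤ E.card + (E.card + 1) * F.card := by omega
  · -- piecewise affinity of the composition
    intro I hIo hIoc hIE
    have hIE' : I ∩ (E : Set ℝ) = ∅ := by
      apply Set.eq_empty_of_subset_empty
      rw [← hIE]
      intro z hz
      refine ⟨hz.1, ?_⟩
      simp only [Finset.coe_union, Set.mem_union]
      exact Or.inl hz.2
    have hIT : ∀ x ∈ I, x ∉ T := by
      intro x hxI hxT
      have : x ∈ I ∩ ((E ∪ hTfin.toFinset : Finset ℝ) : Set ℝ) := by
        refine ⟨hxI, ?_⟩
        simp only [Finset.coe_union, Set.mem_union, Set.Finite.coe_toFinset]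
        exact Or.inr hxT
      rw [hIE] at this
      exact this
    obtain ⟨a, b, hab⟩ := pg I hIo hIoc hIE'
    rcases eq_or_ne a 0 with ha | ha
    · refine ⟨0, h b, fun x hx => ?_⟩
      show h (g x) = 0 * x + h b
      rw [hab x hx, ha]; norm_num
    · -- image interval
      set J : Set ℝ := (fun t => a * t + b) '' I with hJ
      have hJo : IsOpen J := by
        have : J = (fun y => (y - b) / a) ⁻¹' I := by
          ext y
          constructor
          · rintro ⟨x, hx, rfl⟩
            show (a * x + b - b) / a ∈ I
            have hxx : (a * x + b - b) / a = x := by field_simp; ring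
            rwa [hxx]
          · intro hy
            exact ⟨(y - b) / a, hy, by field_simp; ring⟩
        rw [this]
        exact hIo.preimage (by continuity)
      have hJoc : J.OrdConnected := by
        constructor
        rintro _ ⟨x1, hx1, rfl⟩ _ ⟨x2, hx2, rfl⟩ z hz
        set w := (z - b) / a with hw
        have haw : a * w + b = z := by rw [hw]; field_simp; ring
        refine ⟨w, ?_, haw⟩
        have hz1 : a * x1 + b ≤ z := hz.1
        have hz2 : z ≤ a * x2 + b := hz.2
        rcases lt_or_gt_of_ne ha with hneg | hpos
        · have h1 : x2 ≤ w := by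
            rw [hw, le_div_iff_of_neg hneg]; linarith
          have h2 : w ≤ x1 := by
            rw [hw, div_le_iff_of_neg hneg]; linarith
          exact hIoc.out hx2 hx1 ⟨h1, h2⟩
        · have h1 : x1 ≤ w := by
            rw [hw, le_div_iff₀ hpos]; linarith
          have h2 : w ≤ x2 := by
            rw [hw, div_le_iff₀ hpos]; linarith
          exact hIoc.out hx1 hx2 ⟨h1, h2⟩
      have hJF : J ∩ (F : Set ℝ) = ∅ := by
        ext y
        simp only [Set.mem_inter_iff, Set.mem_empty_iff_false, iff_false, not_and]
        rintro ⟨x, hx, rfl⟩ hyF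
        apply hIT x hx
        refine ⟨fun hxE => ?_, ?_, ?_⟩
        · have hmem : x ∈ I ∩ (E : Set ℝ) := ⟨hx, hxE⟩
          rw [hIE'] at hmem
          exact hmem
        · rw [hab x hx]; exact hyF
        · intro hev
          have hev2 : ∀ᶠ z in nhds x, z ∈ I := hIo.mem_nhds hx
          have hev3 : ∀ᶠ z in nhds x, z = x := by
            filter_upwards [hev, hev2] with z h1 h2
            rw [hab z h2, hab x hx] at h1
            have : a * (z - x) = 0 := by linear_combination h1
            rcases mul_eq_zero.mp this with hh | hh
            · exact absurd hh ha
            · linarith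
          obtain ⟨ε, hε, hball⟩ := Metric.eventually_nhds_iff.mp hev3
          have : x + ε / 2 = x := by
            apply hball
            rw [Real.dist_eq]
            rw [abs_of_nonneg (by linarith : (0:ℝ) ≤ x + ε/2 - x)]
            linarith
          linarith
      obtain ⟨c, d, hcd⟩ := ph J hJo hJoc hJF
      refine ⟨c * a, c * b + d, fun x hx => ?_⟩
      have hgJ : g x ∈ J := ⟨x, hx, (hab x hx).symm⟩
      show h (g x) = c * a * x + (c * b + d)
      rw [hcd _ hgJ, hab x hx]; ring

/-- The composition `f_L ∘ ⋯ ∘ f_1` of `L` continuous piecewise affine maps,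
each with at most `n ≥ 1` breakpoints, is piecewise affine with at most
`(n+1)^L - 1` breakpoints. -/
theorem deep_piecewise_affine_knot_bound
    (L n : ℕ) (hn : 1 ≤ n) (f : Fin L → ℝ → ℝ)
    (hc : ∀ i, Continuous (f i))
    (hE : ∀ i, ∃ E : Finset ℝ, E.card ≤ n ∧ PiecewiseAffine (f i) ↑E) :
    ∃ E : Finset ℝ, E.card ≤ (n + 1) ^ L - 1 ∧
      PiecewiseAffine (fun x : ℝ => (List.ofFn f).foldl (fun y g => g y) x) ↑E := by
  induction L with
  | zero =>
      refine ⟨∅, by simp, fun I _ _ _ => ⟨1, 0, fun x _ => by simp⟩⟩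
  | succ L IH =>
      obtain ⟨E, hEcard, hEpa⟩ := IH (fun i => f i.castSucc)
        (fun i => hc i.castSucc) (fun i => hE i.castSucc)
      obtain ⟨F, hFcard, hFpa⟩ := hE (Fin.last L)
      obtain ⟨G, hGcard, hGpa⟩ := pa_comp _ _ E F hEpa hFpa
      refine ⟨G, ?_, ?_⟩
      · have hP : 1 ≤ (n + 1) ^ L := Nat.one_le_pow _ _ (by omega)
        have h1 : E.card + 1 ≤ (n + 1) ^ L := by omega
        have h2 : (E.card + 1) * F.card ≤ (n + 1) ^ L * n := Nat.mul_le_mul h1 hFcard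
        have h3 : (n + 1) ^ (L + 1) = (n + 1) ^ L * n + (n + 1) ^ L := by ring
        omega
      · have heq : (fun x : ℝ => (List.ofFn f).foldl (fun y g => g y) x) =
            (fun x : ℝ => f (Fin.last L)
              ((List.ofFn fun i => f i.castSucc).foldl (fun y g => g y) x)) := by
          funext x
          rw [List.ofFn_succ', List.concat_eq_append, List.foldl_append]
          simp
        rw [heq]
        exact hGpa
end

section
/- (Level sets of the sawtooth) Let G ∈ ℕ with G ≥ 1, set d = 2/G and g_j = −1 + j·d for j = 0, …, G, and define the sawtooth s(x) = Σ_{j=0}^{G} (−1)^j·max(0, 1 − |x − g_j|/d). Then for every c ∈ (−1, 1), the level set {x ∈ [−1, 1] : s(x) = c} has exactly G elements, one in the interior of each grid segment (g_j, g_{j+1}). -/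
/-- Level sets of the sawtooth: with `d = 2/G`, `g_j = -1 + j*d` and
`s x = ∑_{j=0}^{G} (-1)^j * max 0 (1 - |x - g_j|/d)`, for every `c ∈ (-1, 1)`
the level set `{x ∈ [-1, 1] : s x = c}` has exactly `G` elements, one in the
interior of each grid segment `(g_j, g_{j+1})`. -/
theorem sawtooth_level_sets
    (G : ℕ) (hG : 1 ≤ G) (d : ℝ) (hd : d = 2 / G)
    (g : ℕ → ℝ) (hg : ∀ j, g j = -1 + j * d)
    (s : ℝ → ℝ)
    (hs : ∀ x, s x = ∑ j ∈ Finset.range (G + 1),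
      (-1 : ℝ) ^ j * max 0 (1 - |x - g j| / d)) :
    ∀ c ∈ Set.Ioo (-1 : ℝ) 1,
      ({x ∈ Set.Icc (-1 : ℝ) 1 | s x = c}).ncard = G ∧
      ∀ j < G, ∃! x, x ∈ Set.Ioo (g j) (g (j + 1)) ∧ s x = c := by
  have hGR : (1:ℝ) ≤ G := by exact_mod_cast hG
  have hd0 : 0 < d := by rw [hd]; positivity
  have hstep : ∀ j, g (j + 1) = g j + d := by
    intro j; rw [hg, hg]; push_cast; ring
  have hg0 : g 0 = -1 := by rw [hg]; push_cast; ring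
  have hgG : g G = 1 := by
    rw [hg, hd]
    have : (G:ℝ) ≠ 0 := by positivity
    field_simp
    norm_num
  have hmono : StrictMono g := by
    apply strictMono_nat_of_lt_succ
    intro n; rw [hstep]; linarith
  -- segment formula
  have key : ∀ j, j + 1 ≤ G → ∀ x ∈ Set.Icc (g j) (g (j + 1)),
      s x = (-1 : ℝ) ^ j * (1 - 2 * (x - g j) / d) := by
    intro j hj x hx
    obtain ⟨hx1, hx2⟩ := hx
    rw [hs]
    have hsub : ({j, j + 1} : Finset ℕ) ⊆ Finset.range (G + 1) := by
      intro k hk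
      simp only [Finset.mem_insert, Finset.mem_singleton] at hk
      rcases hk with rfl | rfl <;> simp <;> omega
    rw [← Finset.sum_subset hsub]
    · rw [Finset.sum_pair (by omega : j ≠ j + 1)]
      have h1 : |x - g j| = x - g j := abs_of_nonneg (by linarith)
      have h2 : |x - g (j + 1)| = g (j + 1) - x := by
        rw [abs_sub_comm]; exact abs_of_nonneg (by linarith)
      have hx2' : x - g j ≤ d := by rw [hstep] at hx2; linarith
      have hm1 : max 0 (1 - |x - g j| / d) = 1 - (x - g j) / d := by
        rw [h1]
        apply max_eq_right
        have := (div_le_one hd0).mpr hx2'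
        linarith
      have hm2 : max 0 (1 - |x - g (j + 1)| / d) = (x - g j) / d := by
        rw [h2, hstep]
        rw [max_eq_right]
        · field_simp
          ring
        · have : (g j + d - x) / d ≤ 1 := by rw [div_le_one hd0]; linarith
          linarith
      rw [hm1, hm2, pow_succ]
      field_simp
      ring
    · intro k hk hk'
      simp only [Finset.mem_insert, Finset.mem_singleton, not_or] at hk'
      simp only [Finset.mem_range] at hk
      obtain ⟨hkj, hkj1⟩ := hk'
      have habs : d ≤ |x - g k| := by
        rcases lt_or_gt_of_ne hkj with h | h
        · -- k < j : x - g k ≥ (j - k) d ≥ d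
          have : g k + d ≤ g j := by
            rw [hg, hg]
            have : (k:ℝ) + 1 ≤ j := by exact_mod_cast h
            nlinarith
          rw [abs_of_nonneg (by linarith)]; linarith
        · -- k > j+1 : g k - x ≥ d
          have hk2 : j + 1 < k := by omega
          have : g (j + 1) + d ≤ g k := by
            rw [hg, hg]; push_cast
            have : ((j:ℝ) + 1) + 1 ≤ k := by exact_mod_cast hk2
            nlinarith
          rw [abs_sub_comm, abs_of_nonneg (by linarith)]
          linarith
      have : 1 - |x - g k| / d ≤ 0 := by
        have : 1 ≤ |x - g k| / d := (one_le_div hd0).mpr habs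
        linarith
      rw [max_eq_left this, mul_zero]
  intro c hc
  obtain ⟨hc1, hc2⟩ := hc
  -- the candidate solution in segment j
  set xf : ℕ → ℝ := fun j => g j + d * (1 - (-1 : ℝ) ^ j * c) / 2 with hxf
  have hsq : ∀ j : ℕ, (-1 : ℝ) ^ j * (-1 : ℝ) ^ j = 1 := by
    intro j; rw [← pow_add, ← two_mul, pow_mul]; norm_num
  have hcb : ∀ j : ℕ, -1 < (-1 : ℝ) ^ j * c ∧ (-1 : ℝ) ^ j * c < 1 := by
    intro j
    have : |(-1 : ℝ) ^ j * c| < 1 := by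
      rw [abs_mul, abs_pow, abs_neg, abs_one, one_pow, one_mul, abs_lt]
      exact ⟨hc1, hc2⟩
    rw [abs_lt] at this; exact this
  have hxmem : ∀ j, xf j ∈ Set.Ioo (g j) (g (j + 1)) := by
    intro j
    obtain ⟨hb1, hb2⟩ := hcb j
    constructor
    · simp only [hxf]; nlinarith
    · rw [hstep]; simp only [hxf]; nlinarith
  have hsx : ∀ j, j + 1 ≤ G → s (xf j) = c := by
    intro j hj
    have hmem := hxmem j
    rw [key j hj _ (Set.mem_Icc_of_Ioo hmem)]
    have : xf j - g j = d * (1 - (-1 : ℝ) ^ j * c) / 2 := by simp [hxf]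
    rw [this]
    have hd' : d ≠ 0 := ne_of_gt hd0
    field_simp
    nlinarith [hsq j]
  have huniq : ∀ j, j + 1 ≤ G → ∀ x ∈ Set.Icc (g j) (g (j + 1)), s x = c → x = xf j := by
    intro j hj x hx hsxc
    rw [key j hj x hx] at hsxc
    have h1 : 1 - 2 * (x - g j) / d = (-1 : ℝ) ^ j * c := by
      have := congrArg (fun t => (-1 : ℝ) ^ j * t) hsxc
      change (-1 : ℝ) ^ j * ((-1 : ℝ) ^ j * (1 - 2 * (x - g j) / d)) = (-1 : ℝ) ^ j * c at this
      rw [← mul_assoc, hsq j, one_mul] at this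
      exact this
    have hd' : d ≠ 0 := ne_of_gt hd0
    have : x - g j = d * (1 - (-1 : ℝ) ^ j * c) / 2 := by
      field_simp at h1 ⊢
      linarith
    simp only [hxf]; linarith
  -- covering lemma
  have cover : ∀ n : ℕ, 1 ≤ n → ∀ x, g 0 ≤ x → x ≤ g n →
      ∃ j < n, x ∈ Set.Icc (g j) (g (j + 1)) := by
    intro n hn
    induction n with
    | zero => omega
    | succ m ih =>
      intro x hx1 hx2
      rcases Nat.eq_zero_or_pos m with rfl | hm
      · exact ⟨0, by omega, hx1, hx2⟩
      · by_cases h : x ≤ g m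
        · obtain ⟨j, hj, hjm⟩ := ih hm x hx1 h
          exact ⟨j, by omega, hjm⟩
        · exact ⟨m, by omega, le_of_not_ge h, hx2⟩
  constructor
  · -- ncard
    have hset : {x ∈ Set.Icc (-1 : ℝ) 1 | s x = c} = ↑((Finset.range G).image xf) := by
      ext x
      simp only [Set.mem_setOf_eq, Finset.coe_image, Finset.coe_range, Set.mem_image,
        Set.mem_Iio]
      constructor
      · rintro ⟨⟨hx1, hx2⟩, hsc⟩
        obtain ⟨j, hj, hjm⟩ := cover G hG x (by rwa [hg0]) (by rwa [hgG])
        exact ⟨j, hj, (huniq j (by omega) x hjm hsc).symm⟩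
      · rintro ⟨j, hj, rfl⟩
        obtain ⟨ha, hb⟩ := hxmem j
        have h1 : g 0 ≤ g j := hmono.monotone (Nat.zero_le j)
        have h2 : g (j + 1) ≤ g G := hmono.monotone (by omega)
        refine ⟨⟨?_, ?_⟩, hsx j (by omega)⟩
        · rw [← hg0]; linarith
        · rw [← hgG]; linarith
    rw [hset, Set.ncard_coe_finset]
    rw [Finset.card_image_of_injOn, Finset.card_range]
    intro a ha b hb hab
    simp only [Finset.coe_range, Set.mem_Iio] at ha hb
    by_contra hne
    rcases lt_or_gt_of_ne hne with h | h
    · have h1 : xf a < g (a + 1) := (hxmem a).2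
      have h2 : g b < xf b := (hxmem b).1
      have h3 : g (a + 1) ≤ g b := hmono.monotone (by omega)
      linarith [hab ▸ (by linarith : xf a < xf b)]
    · have h1 : xf b < g (b + 1) := (hxmem b).2
      have h2 : g a < xf a := (hxmem a).1
      have h3 : g (b + 1) ≤ g a := hmono.monotone (by omega)
      linarith [hab ▸ (by linarith : xf b < xf a)]
  · intro j hj
    refine ⟨xf j, ⟨hxmem j, hsx j (by omega)⟩, ?_⟩
    rintro y ⟨hy, hsy⟩
    exact huniq j (by omega) y (Set.mem_Icc_of_Ioo hy) hsy
end
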